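/- arXiv:2211.10471 — 2 statements merged into one kernel-verified Lean document; each statement's English description precedes it below -/
import Mathlib

section
/- Let φ = (1+√5)/2. Then lim_{n→∞} (1/n) · Σ_{i=1}^{n} ( φ·n·(1 − (1 − 1/n²)^i) + (1 − 1/n²)^i − (1 − 1/√n − 1/n²)^i ) = φ/2 + 1, where n ranges over natural numbers n ≥ 2. -/
/-!
Write `S n = ∑_{i=1}^n (1 - (1 - 1/n²)^i)`. Since `(1 - 1/n²)^i = 1 - (1 - (1 - 1/n²)^i)`, the
averaged sum equals `φ S n + 1 - S n / n - (1/n) ∑_{i=1}^n b^i` with `b = 1 - 1/√n - 1/n²`.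
Bernoulli's inequality and `1 - y^i ≥ i (1 - y) y^i` squeeze `1 - (1 - x)^i` between
`(1 - n x) i x` and `i x` for `i ≤ n`; with `x = 1/n²` the Gauss sum gives `S n → 1/2`.
The geometric sum `∑ b^i` is at most `1/(1 - b) ≤ √n`, so its average vanishes.
-/

open Filter Finset Topology

theorem one_sub_pow_le_mul_one_sub {R : Type*} [CommRing R] [LinearOrder R]
    [IsStrictOrderedRing R] {y : R} (hy : -1 ≤ y) (i : ℕ) : 1 - y ^ i ≤ i * (1 - y) := by
  have := one_add_mul_le_pow (a := y - 1) (by linarith) i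
  rw [add_sub_cancel] at this
  linarith

theorem mul_one_sub_mul_pow_le_one_sub_pow {R : Type*} [CommRing R] [LinearOrder R]
    [IsStrictOrderedRing R] {y : R} (h0 : 0 ≤ y) (h1 : y ≤ 1) (i : ℕ) :
    i * (1 - y) * y ^ i ≤ 1 - y ^ i := by
  have hgeom : 1 - y ^ i = (1 - y) * ∑ j ∈ range i, y ^ j := by
    linear_combination mul_geom_sum y i
  have hsum : (i : R) * y ^ i ≤ ∑ j ∈ range i, y ^ j := by
    simpa using card_nsmul_le_sum (range i) (y ^ ·) (y ^ i)
      fun j hj => pow_le_pow_of_le_one h0 h1 (mem_range.1 hj).le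
  rw [hgeom, mul_comm (i : R), mul_assoc]
  exact mul_le_mul_of_nonneg_left hsum (sub_nonneg.2 h1)

theorem sum_Icc_natCast (n : ℕ) : ∑ i ∈ Icc 1 n, (i : ℝ) = n * (n + 1) / 2 := by
  induction n with
  | zero => simp
  | succ n ih =>
    rw [sum_Icc_succ_top (by omega), ih]
    push_cast
    ring

theorem sum_Icc_one_sub_pow_le {x : ℝ} (hx : x ≤ 2) (n : ℕ) :
    ∑ i ∈ Icc 1 n, (1 - (1 - x) ^ i) ≤ x * (n * (n + 1) / 2) := by
  rw [← sum_Icc_natCast, mul_sum]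
  refine sum_le_sum fun i _ => ?_
  have := one_sub_pow_le_mul_one_sub (y := 1 - x) (by linarith) i
  linarith

theorem le_sum_Icc_one_sub_pow {x : ℝ} (hx₀ : 0 ≤ x) (hx₁ : x ≤ 1) (n : ℕ) :
    (1 - n * x) * (x * (n * (n + 1) / 2)) ≤ ∑ i ∈ Icc 1 n, (1 - (1 - x) ^ i) := by
  rw [← sum_Icc_natCast, mul_sum, mul_sum]
  refine sum_le_sum fun i hi => ?_
  have hpow : 1 - n * x ≤ (1 - x) ^ i :=
    calc 1 - n * x ≤ (1 - x) ^ n := by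
          simpa [sub_eq_add_neg] using one_add_mul_le_pow (a := -x) (by linarith) n
      _ ≤ (1 - x) ^ i := pow_le_pow_of_le_one (by linarith) (by linarith) (mem_Icc.1 hi).2
  have := mul_one_sub_mul_pow_le_one_sub_pow (y := 1 - x) (by linarith) (by linarith) i
  rw [sub_sub_cancel] at this
  have hix : 0 ≤ (i : ℝ) * x := by positivity
  nlinarith [mul_le_mul_of_nonneg_left hpow hix]

theorem tendsto_sum_Icc_one_sub_one_sub_inv_sq_pow :
    Tendsto (fun n : ℕ => ∑ i ∈ Icc 1 n, (1 - (1 - 1 / (n : ℝ) ^ 2) ^ i)) atTop (𝓝 (1 / 2)) := by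
  have hinv : Tendsto (fun n : ℕ => 1 / (n : ℝ)) atTop (𝓝 0) :=
    tendsto_one_div_atTop_nhds_zero_nat
  have hupper : Tendsto (fun n : ℕ => (1 + 1 / (n : ℝ)) / 2) atTop (𝓝 (1 / 2)) := by
    simpa using (hinv.const_add 1).div_const 2
  have hlower : Tendsto (fun n : ℕ => (1 - 1 / (n : ℝ)) * ((1 + 1 / (n : ℝ)) / 2)) atTop
      (𝓝 (1 / 2)) := by
    simpa using (hinv.const_sub 1).mul hupper
  have hbounds : ∀ᶠ n : ℕ in atTop,
      (1 - 1 / (n : ℝ)) * ((1 + 1 / (n : ℝ)) / 2) ≤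
          ∑ i ∈ Icc 1 n, (1 - (1 - 1 / (n : ℝ) ^ 2) ^ i) ∧
        ∑ i ∈ Icc 1 n, (1 - (1 - 1 / (n : ℝ) ^ 2) ^ i) ≤ (1 + 1 / (n : ℝ)) / 2 := by
    filter_upwards [eventually_ge_atTop 1] with n hn
    have hn1 : (1 : ℝ) ≤ n := by exact_mod_cast hn
    have hx₁ : 1 / (n : ℝ) ^ 2 ≤ 1 := div_le_one_of_le₀ (by nlinarith) (by positivity)
    have hgauss : 1 / (n : ℝ) ^ 2 * (n * (n + 1) / 2) = (1 + 1 / (n : ℝ)) / 2 := by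
      field_simp
    have hnx : n * (1 / (n : ℝ) ^ 2) = 1 / n := by field_simp
    rw [← hgauss, ← hnx]
    exact ⟨le_sum_Icc_one_sub_pow (by positivity) hx₁ n,
      sum_Icc_one_sub_pow_le (by linarith) n⟩
  exact tendsto_of_tendsto_of_tendsto_of_le_of_le' hlower hupper
    (hbounds.mono fun _ => And.left) (hbounds.mono fun _ => And.right)

theorem sum_Icc_pow_le_inv_one_sub {K : Type*} [Field K] [LinearOrder K] [IsStrictOrderedRing K]
    {r : K} (h0 : 0 ≤ r) (h1 : r < 1) (n : ℕ) : ∑ i ∈ Icc 1 n, r ^ i ≤ (1 - r)⁻¹ := by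
  rw [← Ico_add_one_right_eq_Icc, inv_eq_one_div]
  calc ∑ i ∈ Ico 1 (n + 1), r ^ i ≤ r ^ 1 / (1 - r) := geom_sum_Ico_le_of_lt_one h0 h1
    _ ≤ 1 / (1 - r) := by gcongr; linarith

theorem tendsto_one_div_mul_sum_Icc_pow_one_sub_inv_sqrt :
    Tendsto (fun n : ℕ => 1 / (n : ℝ) * ∑ i ∈ Icc 1 n, (1 - 1 / Real.sqrt n - 1 / (n : ℝ) ^ 2) ^ i)
      atTop (𝓝 0) := by
  have hlim : Tendsto (fun n : ℕ => (Real.sqrt n)⁻¹) atTop (𝓝 0) :=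
    tendsto_inv_atTop_zero.comp (Real.tendsto_sqrt_atTop.comp tendsto_natCast_atTop_atTop)
  have hbounds : ∀ᶠ n : ℕ in atTop,
      0 ≤ 1 / (n : ℝ) * ∑ i ∈ Icc 1 n, (1 - 1 / Real.sqrt n - 1 / (n : ℝ) ^ 2) ^ i ∧
      1 / (n : ℝ) * ∑ i ∈ Icc 1 n, (1 - 1 / Real.sqrt n - 1 / (n : ℝ) ^ 2) ^ i ≤
        (Real.sqrt n)⁻¹ := by
    filter_upwards [eventually_ge_atTop 4] with n hn
    have hn4 : (4 : ℝ) ≤ n := by exact_mod_cast hn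
    have hs : 2 ≤ Real.sqrt n := Real.le_sqrt_of_sq_le (by linarith)
    have hsqrt : 0 < 1 / Real.sqrt n := by positivity
    have hsq : 0 < 1 / (n : ℝ) ^ 2 := by positivity
    have hr0 : 0 ≤ 1 - 1 / Real.sqrt n - 1 / (n : ℝ) ^ 2 := by
      have : 1 / Real.sqrt n ≤ 1 / 2 := by gcongr
      have : 1 / (n : ℝ) ^ 2 ≤ 1 / 2 := by gcongr; nlinarith
      linarith
    have hsum : ∑ i ∈ Icc 1 n, (1 - 1 / Real.sqrt n - 1 / (n : ℝ) ^ 2) ^ i ≤ Real.sqrt n := by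
      refine (sum_Icc_pow_le_inv_one_sub hr0 (by linarith) n).trans ?_
      rw [inv_le_comm₀ (by linarith) (by positivity), inv_eq_one_div]
      linarith
    refine ⟨by positivity, ?_⟩
    calc 1 / (n : ℝ) * ∑ i ∈ Icc 1 n, (1 - 1 / Real.sqrt n - 1 / (n : ℝ) ^ 2) ^ i
        ≤ 1 / (n : ℝ) * Real.sqrt n := by gcongr
      _ = (Real.sqrt n)⁻¹ := by rw [one_div_mul_eq_div, Real.sqrt_div_self]
  exact squeeze_zero' (hbounds.mono fun _ => And.left) (hbounds.mono fun _ => And.right) hlim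

theorem one_div_mul_sum_Icc_eq {n : ℕ} (hn : n ≠ 0) (φ a b : ℝ) :
    1 / (n : ℝ) * ∑ i ∈ Icc 1 n, (φ * n * (1 - a ^ i) + a ^ i - b ^ i) =
      φ * ∑ i ∈ Icc 1 n, (1 - a ^ i) + 1 - (∑ i ∈ Icc 1 n, (1 - a ^ i)) / n -
        1 / (n : ℝ) * ∑ i ∈ Icc 1 n, b ^ i := by
  have hterm : ∀ i, φ * n * (1 - a ^ i) + a ^ i - b ^ i =
      (φ * n - 1) * (1 - a ^ i) + 1 - b ^ i := fun i => by ring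
  simp only [hterm, sum_sub_distrib, sum_add_distrib, ← mul_sum, sum_const, Nat.card_Icc,
    add_tsub_cancel_right, nsmul_eq_mul, mul_one]
  field_simp
  ring

theorem tendsto_prophet_value_general (φ : ℝ) :
    Tendsto
      (fun n : ℕ =>
        (1 / (n : ℝ)) *
          ∑ i ∈ Finset.Icc 1 n,
            (φ * (n : ℝ) * (1 - (1 - 1 / (n : ℝ) ^ 2) ^ i) +
              (1 - 1 / (n : ℝ) ^ 2) ^ i - (1 - 1 / Real.sqrt n - 1 / (n : ℝ) ^ 2) ^ i))
      atTop (nhds (φ / 2 + 1)) := by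
  have hS := tendsto_sum_Icc_one_sub_one_sub_inv_sq_pow
  have hlim := ((hS.const_mul φ).add_const 1).sub (hS.div_atTop tendsto_natCast_atTop_atTop)
    |>.sub tendsto_one_div_mul_sum_Icc_pow_one_sub_inv_sqrt
  rw [show φ / 2 + 1 = φ * (1 / 2) + 1 - 0 - 0 by ring]
  refine hlim.congr' ?_
  filter_upwards [eventually_ne_atTop 0] with n hn
  exact (one_div_mul_sum_Icc_eq hn φ _ _).symm

/-- The prophet's expected value on the three-point distribution is asymptotically
`(φ/2 + 1)·n`. -/
theorem tendsto_prophet_value (φ : ℝ) (hφ : φ = (1 + Real.sqrt 5) / 2) :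
    Tendsto
      (fun n : ℕ =>
        (1 / (n : ℝ)) *
          ∑ i ∈ Finset.Icc 1 n,
            (φ * (n : ℝ) * (1 - (1 - 1 / (n : ℝ) ^ 2) ^ i) +
              (1 - 1 / (n : ℝ) ^ 2) ^ i - (1 - 1 / Real.sqrt n - 1 / (n : ℝ) ^ 2) ^ i))
      atTop (nhds (φ / 2 + 1)) :=
  tendsto_prophet_value_general φ
end

section
/- Let φ = (1+√5)/2 and fix a real b ∈ [0,1]. Then lim_{n→∞} (1/n) · Σ_{i=1}^{⌊b·n⌋} (1 − 1/n²)^{i−1} · ( φ·(n − i + 1)/n + 1/√n ) = φ·b·(1 − b/2), where n ranges over natural numbers n ≥ 2. -/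
/-!
Writing `w = (1 - 1/n²)^(i-1)`, the summand splits as `(φ (1 + 1/n) + 1/√n) · w/n - φ · w i/n²`.
By Bernoulli's inequality every weight with `i ≤ ⌊b n⌋` lies in `[1 - ⌊b n⌋/n², 1]`, and
`⌊b n⌋/n² → 0`, so the weights may be dropped from both (nonnegative) sums. What remains are
`⌊b n⌋/n → b` and, by Gauss' formula, `⌊b n⌋(⌊b n⌋ + 1)/(2n²) → b²/2`.
-/

open Filter Topology Finset

theorem tendsto_sum_mul_of_le_of_le_one {α ι : Type*} {l : Filter α} {s : α → Finset ι}
    {w f : α → ι → ℝ} {c : α → ℝ} {L : ℝ} (hc : Tendsto c l (𝓝 1))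
    (hw : ∀ᶠ a in l, ∀ i ∈ s a, c a ≤ w a i ∧ w a i ≤ 1) (hf : ∀ a, ∀ i ∈ s a, 0 ≤ f a i)
    (hL : Tendsto (fun a ↦ ∑ i ∈ s a, f a i) l (𝓝 L)) :
    Tendsto (fun a ↦ ∑ i ∈ s a, w a i * f a i) l (𝓝 L) := by
  have hlower : Tendsto (fun a ↦ c a * ∑ i ∈ s a, f a i) l (𝓝 L) := by
    simpa using hc.mul hL
  refine tendsto_of_tendsto_of_tendsto_of_le_of_le' hlower hL ?_ ?_ <;>
    filter_upwards [hw] with a hwa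
  · rw [mul_sum]
    exact sum_le_sum fun i hi ↦ mul_le_mul_of_nonneg_right (hwa i hi).1 (hf a i hi)
  · exact sum_le_sum fun i hi ↦ mul_le_of_le_one_left (hf a i hi) (hwa i hi).2

theorem one_sub_mul_le_one_sub_pow {x : ℝ} (hx0 : 0 ≤ x) (hx2 : x ≤ 2) {k m : ℕ} (hkm : k ≤ m) :
    1 - m * x ≤ (1 - x) ^ k := by
  have hkm' : (k : ℝ) ≤ m := by exact_mod_cast hkm
  calc 1 - m * x ≤ 1 + k * (-x) := by nlinarith
    _ ≤ (1 + -x) ^ k := one_add_mul_le_pow (by linarith) k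
    _ = (1 - x) ^ k := by rw [← sub_eq_add_neg]

theorem sum_Icc_one_natCast (m : ℕ) : ∑ i ∈ Icc 1 m, (i : ℝ) = m * (m + 1) / 2 := by
  induction m with
  | zero => simp
  | succ k ih =>
    rw [sum_Icc_succ_top (by omega), ih]
    push_cast
    ring

section FloorMul

variable {b : ℝ}

theorem tendsto_natFloor_mul_div_natCast (hb : 0 ≤ b) :
    Tendsto (fun n : ℕ ↦ (⌊b * n⌋₊ : ℝ) / n) atTop (𝓝 b) :=
  (tendsto_nat_floor_mul_div_atTop hb).comp tendsto_natCast_atTop_atTop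

theorem tendsto_natFloor_mul_div_natCast_sq (hb : 0 ≤ b) :
    Tendsto (fun n : ℕ ↦ (⌊b * n⌋₊ : ℝ) / n ^ 2) atTop (𝓝 0) := by
  have h := (tendsto_natFloor_mul_div_natCast hb).mul tendsto_one_div_atTop_nhds_zero_nat
  rw [mul_zero] at h
  exact h.congr fun n ↦ by ring

theorem tendsto_sum_Icc_natFloor_one_sub_inv_sq_pow_mul (hb : 0 ≤ b) {f : ℕ → ℕ → ℝ} {L : ℝ}
    (hf : ∀ n : ℕ, ∀ i ∈ Icc 1 ⌊b * n⌋₊, 0 ≤ f n i)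
    (hL : Tendsto (fun n : ℕ ↦ ∑ i ∈ Icc 1 ⌊b * n⌋₊, f n i) atTop (𝓝 L)) :
    Tendsto (fun n : ℕ ↦ ∑ i ∈ Icc 1 ⌊b * n⌋₊, (1 - 1 / (n : ℝ) ^ 2) ^ (i - 1) * f n i)
      atTop (𝓝 L) := by
  have hc := tendsto_const_nhds (x := (1 : ℝ)).sub (tendsto_natFloor_mul_div_natCast_sq hb)
  rw [sub_zero] at hc
  refine tendsto_sum_mul_of_le_of_le_one hc ?_ hf hL
  filter_upwards [eventually_ge_atTop 1] with n hn i hi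
  have hx1 : 1 / (n : ℝ) ^ 2 ≤ 1 := by
    rw [div_le_one (by positivity)]
    exact one_le_pow₀ (by exact_mod_cast hn)
  have hx0 : 0 ≤ 1 / (n : ℝ) ^ 2 := by positivity
  refine ⟨?_, pow_le_one₀ (by linarith) (by linarith)⟩
  rw [← mul_one_div]
  exact one_sub_mul_le_one_sub_pow hx0 (by linarith) (by grind)

theorem tendsto_sum_Icc_natFloor_one_sub_inv_sq_pow_div (hb : 0 ≤ b) :
    Tendsto (fun n : ℕ ↦ ∑ i ∈ Icc 1 ⌊b * n⌋₊, (1 - 1 / (n : ℝ) ^ 2) ^ (i - 1) * (1 / n))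
      atTop (𝓝 b) := by
  refine tendsto_sum_Icc_natFloor_one_sub_inv_sq_pow_mul hb (fun n i _ ↦ by positivity) ?_
  refine (tendsto_natFloor_mul_div_natCast hb).congr fun n ↦ ?_
  rw [sum_const, Nat.card_Icc, nsmul_eq_mul, Nat.add_sub_cancel, mul_one_div]

theorem tendsto_sum_Icc_natFloor_one_sub_inv_sq_pow_mul_div_sq (hb : 0 ≤ b) :
    Tendsto (fun n : ℕ ↦ ∑ i ∈ Icc 1 ⌊b * n⌋₊, (1 - 1 / (n : ℝ) ^ 2) ^ (i - 1) * (i / n ^ 2))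
      atTop (𝓝 (b ^ 2 / 2)) := by
  refine tendsto_sum_Icc_natFloor_one_sub_inv_sq_pow_mul hb (fun n i _ ↦ by positivity) ?_
  have hratio := tendsto_natFloor_mul_div_natCast hb
  have h := (hratio.mul (hratio.add tendsto_one_div_atTop_nhds_zero_nat)).div_const 2
  rw [add_zero, ← sq] at h
  refine h.congr fun n ↦ ?_
  rw [← sum_div, sum_Icc_one_natCast]
  ring

end FloorMul

theorem tendsto_one_div_sqrt_natCast :
    Tendsto (fun n : ℕ ↦ 1 / Real.sqrt n) atTop (𝓝 0) :=
  (tendsto_inv_atTop_zero.comp (Real.tendsto_sqrt_atTop.comp tendsto_natCast_atTop_atTop)).congr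
    fun _ ↦ (one_div _).symm

theorem tendsto_online_partial_sum_general (φ : ℝ)
    (b : ℝ) (hb0 : 0 ≤ b) :
    Tendsto
      (fun n : ℕ =>
        (1 / (n : ℝ)) *
          ∑ i ∈ Finset.Icc 1 ⌊b * (n : ℝ)⌋₊,
            (1 - 1 / (n : ℝ) ^ 2) ^ (i - 1) *
              (φ * ((n : ℝ) - (i : ℝ) + 1) / (n : ℝ) + 1 / Real.sqrt n))
      atTop (nhds (φ * b * (1 - b / 2))) := by
  have hcoeff : Tendsto (fun n : ℕ ↦ φ * (1 + 1 / n) + 1 / Real.sqrt n) atTop (𝓝 φ) := by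
    simpa using ((tendsto_const_nhds (x := (1 : ℝ)).add tendsto_one_div_atTop_nhds_zero_nat
      ).const_mul φ).add tendsto_one_div_sqrt_natCast
  have hlim := (hcoeff.mul (tendsto_sum_Icc_natFloor_one_sub_inv_sq_pow_div hb0)).sub
    ((tendsto_sum_Icc_natFloor_one_sub_inv_sq_pow_mul_div_sq hb0).const_mul φ)
  rw [show φ * b - φ * (b ^ 2 / 2) = φ * b * (1 - b / 2) by ring] at hlim
  refine hlim.congr' ?_
  filter_upwards [eventually_ge_atTop 1] with n hn
  have hn0 : (n : ℝ) ≠ 0 := by positivity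
  simp only [mul_sum, ← sum_sub_distrib]
  refine sum_congr rfl fun i _ ↦ ?_
  generalize (1 - 1 / (n : ℝ) ^ 2) ^ (i - 1) = r
  field_simp
  ring

/-- Per-step contribution limit of the optimal online algorithm on the three-point
distribution: the scaled partial sum up to `⌊b·n⌋` tends to `φ·b·(1 − b/2)`. -/
theorem tendsto_online_partial_sum (φ : ℝ) (hφ : φ = (1 + Real.sqrt 5) / 2)
    (b : ℝ) (hb0 : 0 ≤ b) (hb1 : b ≤ 1) :
    Tendsto
      (fun n : ℕ =>
        (1 / (n : ℝ)) *
          ∑ i ∈ Finset.Icc 1 ⌊b * (n : ℝ)⌋₊,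
            (1 - 1 / (n : ℝ) ^ 2) ^ (i - 1) *
              (φ * ((n : ℝ) - (i : ℝ) + 1) / (n : ℝ) + 1 / Real.sqrt n))
      atTop (nhds (φ * b * (1 - b / 2))) :=
  tendsto_online_partial_sum_general φ b hb0
end
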